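/- arXiv:2403.12419 — 6 statements merged into one kernel-verified Lean document; each statement's English description precedes it below -/
import Mathlib

section
/- Let F, k_f, ρ be positive integers with k_f ≤ F/2 and ρ ≤ F/(2·k_f), let α ∈ [0,1], and for x ∈ {1,…,k_f} define h_x = Σ_{ℓ=0}^{x} C(x,ℓ)·α^ℓ·(1−α)^{x−ℓ}·(1 − C(F−ℓ−1, ρ−1)/C(F, ρ)). Then h_x ≤ (1 − ρ/F) + α·ρ/F. -/
/-! Telescoping with Pascal's rule, `C(F-ℓ-1, ρ-1)` falls short of `C(F-1, ρ-1)` by `ℓ` terms,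
each at most `C(F-2, ρ-2)`; dividing by `C(F, ρ)` gives
`C(F-ℓ-1, ρ-1) / C(F, ρ) ≥ ρ/F - ℓ·ρ(ρ-1)/(F(F-1))`. Averaging this affine bound over
`ℓ ∼ Bin(x, α)` bounds the sum by `1 - ρ/F + xα·ρ(ρ-1)/(F(F-1))`, and `2xρ ≤ F` gives
`x(ρ-1) ≤ F-1`. -/

open Finset

theorem Nat.choose_add_le_add_mul_choose (m ℓ r : ℕ) :
    (m + ℓ + 1).choose (r + 1) ≤ (m + 1).choose (r + 1) + ℓ * (m + ℓ).choose r := by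
  induction ℓ with
  | zero => simp
  | succ ℓ ih =>
    have hmono : (m + ℓ + 1).choose r ≤ (m + (ℓ + 1)).choose r :=
      Nat.choose_le_choose r (by omega)
    calc (m + (ℓ + 1) + 1).choose (r + 1)
        = (m + ℓ + 1).choose r + (m + ℓ + 1).choose (r + 1) := Nat.choose_succ_succ' _ _
      _ ≤ (m + (ℓ + 1)).choose r + ((m + 1).choose (r + 1) + ℓ * (m + ℓ).choose r) :=
          Nat.add_le_add hmono ih
      _ ≤ (m + 1).choose (r + 1) + (ℓ + 1) * (m + (ℓ + 1)).choose r := by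
          have : (m + ℓ).choose r ≤ (m + (ℓ + 1)).choose r := Nat.choose_le_choose r (by omega)
          nlinarith

lemma sub_mul_le_choose_div_choose {F ρ ℓ : ℕ} (hρ : 1 ≤ ρ) (hℓ : ℓ + ρ ≤ F) :
    (ρ : ℝ) / F - ℓ * (ρ * (ρ - 1) / (F * (F - 1))) ≤
      ((F - ℓ - 1).choose (ρ - 1) : ℝ) / F.choose ρ := by
  obtain rfl | hρ2 : ρ = 1 ∨ 2 ≤ ρ := by omega
  · simp
  obtain ⟨r, rfl⟩ : ∃ r, ρ = r + 2 := ⟨ρ - 2, by omega⟩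
  obtain ⟨n, rfl⟩ : ∃ n, F = n + ℓ + 2 := ⟨F - ℓ - 2, by omega⟩
  have hC : (0 : ℝ) < (n + ℓ + 2).choose (r + 2) := by exact_mod_cast Nat.choose_pos (by omega)
  have habsorb₁ : ((n + ℓ + 2 : ℕ) : ℝ) * (n + ℓ + 1).choose (r + 1) =
      (n + ℓ + 2).choose (r + 2) * (r + 2 : ℕ) := by
    exact_mod_cast Nat.add_one_mul_choose_eq (n + ℓ + 1) (r + 1)
  have habsorb₂ : ((n + ℓ + 1 : ℕ) : ℝ) * (n + ℓ).choose r =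
      (n + ℓ + 1).choose (r + 1) * (r + 1 : ℕ) := by
    exact_mod_cast Nat.add_one_mul_choose_eq (n + ℓ) r
  have hpascal : ((n + ℓ + 1).choose (r + 1) : ℝ) ≤
      (n + 1).choose (r + 1) + ℓ * (n + ℓ).choose r := by
    exact_mod_cast Nat.choose_add_le_add_mul_choose n ℓ r
  push_cast at habsorb₁ habsorb₂ ⊢
  rw [le_div_iff₀ hC, show n + ℓ + 2 - ℓ - 1 = n + 1 by omega,
    show (n : ℝ) + ℓ + 2 - 1 = n + ℓ + 1 by ring]
  calc _ = ((n + ℓ + 1).choose (r + 1) : ℝ) - ℓ * (n + ℓ).choose r := by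
        field_simp
        linear_combination (-((n : ℝ) + ℓ + 1 - ℓ * (r + 1))) * habsorb₁ +
          ℓ * ((n : ℝ) + ℓ + 2) * habsorb₂
    _ ≤ _ := by linarith

lemma sum_choose_mul_pow_mul_affine (n : ℕ) (α a b : ℝ) :
    ∑ ℓ ∈ range (n + 1), (n.choose ℓ : ℝ) * α ^ ℓ * (1 - α) ^ (n - ℓ) * (a + ℓ * b) =
      a + n * α * b := by
  have hsum := congrArg (Polynomial.eval α) (bernsteinPolynomial.sum ℝ n)
  have hmean := congrArg (Polynomial.eval α) (bernsteinPolynomial.sum_smul ℝ n)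
  simp only [Polynomial.eval_finsetSum, bernsteinPolynomial, Polynomial.eval_mul,
    Polynomial.eval_pow, Polynomial.eval_natCast, Polynomial.eval_X, Polynomial.eval_sub,
    Polynomial.eval_one, nsmul_eq_mul] at hsum hmean
  calc _ = a * ∑ ℓ ∈ range (n + 1), (n.choose ℓ : ℝ) * α ^ ℓ * (1 - α) ^ (n - ℓ) +
        b * ∑ ℓ ∈ range (n + 1), ℓ * ((n.choose ℓ : ℝ) * α ^ ℓ * (1 - α) ^ (n - ℓ)) := by
        simp only [mul_sum, ← sum_add_distrib]
        exact sum_congr rfl fun _ _ => by ring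
    _ = a + n * α * b := by rw [hsum, hmean]; ring

theorem stmt_2_general (F kf ρ : ℕ) (hkf : 0 < kf) (hρ : 0 < ρ)
    (hρF : (ρ : ℝ) ≤ (F : ℝ) / (2 * kf))
    (α : ℝ) (hα0 : 0 ≤ α) (hα1 : α ≤ 1)
    (x : ℕ) (hxkf : x ≤ kf) :
    ∑ ℓ ∈ Finset.range (x + 1),
      (x.choose ℓ : ℝ) * α ^ ℓ * (1 - α) ^ (x - ℓ) *
        (1 - ((F - ℓ - 1).choose (ρ - 1) : ℝ) / (F.choose ρ : ℝ))
      ≤ (1 - (ρ : ℝ) / F) + α * ρ / F := by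
  have hkρ : 2 * kf * ρ ≤ F := by
    rw [le_div_iff₀ (by positivity)] at hρF
    exact_mod_cast (by push_cast; linarith : ((2 * kf * ρ : ℕ) : ℝ) ≤ F)
  have hxρ : 2 * x * ρ ≤ F := le_trans (by gcongr) hkρ
  have hF2 : (2 : ℝ) ≤ F := by exact_mod_cast le_trans (by nlinarith) hkρ
  set c : ℝ := ρ * (ρ - 1) / (F * (F - 1))
  calc _ ≤ ∑ ℓ ∈ range (x + 1),
        (x.choose ℓ : ℝ) * α ^ ℓ * (1 - α) ^ (x - ℓ) * ((1 - (ρ : ℝ) / F) + ℓ * c) := by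
        refine sum_le_sum fun ℓ hℓ => mul_le_mul_of_nonneg_left ?_ ?_
        · have := sub_mul_le_choose_div_choose (F := F) hρ
            (by have := mem_range_succ_iff.1 hℓ; nlinarith : ℓ + ρ ≤ F)
          linarith
        · have : 0 ≤ 1 - α := by linarith
          positivity
    _ = (1 - (ρ : ℝ) / F) + x * α * c := sum_choose_mul_pow_mul_affine x α _ _
    _ ≤ (1 - (ρ : ℝ) / F) + α * ρ / F := by
        have hxρR : (x : ℝ) * (ρ - 1) ≤ F - 1 := by
          have : ((2 * x * ρ : ℕ) : ℝ) ≤ F := by exact_mod_cast hxρ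
          push_cast at this
          nlinarith [(Nat.cast_nonneg x : (0 : ℝ) ≤ x)]
        have hc : x * α * c = α * ρ / F * (x * (ρ - 1) / (F - 1)) := by
          simp only [c]; field_simp
        rw [hc]
        have hratio : x * (ρ - 1) / (F - 1) ≤ (1 : ℝ) := (div_le_one (by linarith)).2 hxρR
        linarith [mul_le_of_le_one_right (by positivity : 0 ≤ α * ρ / F) hratio]

theorem stmt_2 (F kf ρ : ℕ) (hF : 0 < F) (hkf : 0 < kf) (hρ : 0 < ρ)
    (hkfF : (kf : ℝ) ≤ F / 2) (hρF : (ρ : ℝ) ≤ (F : ℝ) / (2 * kf))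
    (α : ℝ) (hα0 : 0 ≤ α) (hα1 : α ≤ 1)
    (x : ℕ) (hx1 : 1 ≤ x) (hxkf : x ≤ kf) :
    ∑ ℓ ∈ Finset.range (x + 1),
      (x.choose ℓ : ℝ) * α ^ ℓ * (1 - α) ^ (x - ℓ) *
        (1 - ((F - ℓ - 1).choose (ρ - 1) : ℝ) / (F.choose ρ : ℝ))
      ≤ (1 - (ρ : ℝ) / F) + α * ρ / F :=
  stmt_2_general F kf ρ hkf hρ hρF α hα0 hα1 x hxkf
end

section
/- Let F, k_f, ρ be positive integers with k_f ≤ F/2 and ρ ≤ F/(2·k_f), let α ∈ [0,1], and define h_x as above for x ∈ {1,…,k_f}. Then h_x ≤ 1 − (ρ/F)·(1 − 2·ρ·α/F)^x. -/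
/-!
Write `q ℓ = C(F-ℓ-1, ρ-1) / C(F, ρ)`, so that `h_x = 1 - E[q L]` for `L ~ Bin(x, α)`.
Since `q 0 = ρ / F` and `q (ℓ+1) / q ℓ = 1 - (ρ-1)/(F-ℓ-1) ≥ 1 - 2ρ/F` when `2(ℓ+1) ≤ F`,
we get `q ℓ ≥ (ρ/F) β^ℓ` with `β = 1 - 2ρ/F ≥ 0`, and `E[β^L] = (1 - α + αβ)^x = (1 - 2ρα/F)^x`.
-/

open Finset

theorem Nat.cast_choose_pred {K : Type*} [Field K] [CharZero K] {m : ℕ} (hm : 0 < m) (k : ℕ) :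
    ((m - 1).choose k : K) = m.choose k * (1 - k / m) := by
  obtain ⟨n, rfl⟩ : ∃ n, m = n + 1 := ⟨m - 1, by omega⟩
  have hn : ((n + 1 : ℕ) : K) ≠ 0 := Nat.cast_ne_zero.mpr n.succ_ne_zero
  rw [Nat.add_sub_cancel, one_sub_div hn, mul_div_assoc', eq_div_iff hn]
  rcases le_or_gt k (n + 1) with hk | hk
  · rw [← Nat.cast_sub hk]; exact_mod_cast Nat.choose_mul_succ_eq n k
  · simp [Nat.choose_eq_zero_of_lt hk, Nat.choose_eq_zero_of_lt (Nat.lt_of_succ_lt hk)]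

theorem sum_choose_mul_pow_mul_pow {R : Type*} [CommRing R] (α β : R) (x : ℕ) :
    ∑ ℓ ∈ range (x + 1), (x.choose ℓ : R) * α ^ ℓ * (1 - α) ^ (x - ℓ) * β ^ ℓ
      = (1 - α + α * β) ^ x := by
  rw [add_comm (1 - α), add_pow]
  exact sum_congr rfl fun ℓ _ => by ring

theorem div_mul_pow_le_choose_div_choose {F ρ ℓ : ℕ} (hρ : 0 < ρ) (hρF : 2 * ρ ≤ F)
    (hℓF : 2 * ℓ ≤ F) :
    (ρ / F : ℝ) * (1 - 2 * ρ / F) ^ ℓ ≤ ((F - ℓ - 1).choose (ρ - 1) : ℝ) / F.choose ρ := by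
  have hF : (0 : ℝ) < F := by exact_mod_cast (show 0 < F by omega)
  have hβ : (0 : ℝ) ≤ 1 - 2 * ρ / F := by
    rw [sub_nonneg, div_le_one hF]; exact_mod_cast hρF
  induction ℓ with
  | zero =>
    have hC : (0 : ℝ) < F.choose ρ := by exact_mod_cast Nat.choose_pos (by omega)
    have h := Nat.add_one_mul_choose_eq (F - 1) (ρ - 1)
    rw [Nat.sub_add_cancel (by omega), Nat.sub_add_cancel hρ] at h
    rw [show F - 0 - 1 = F - 1 by omega, pow_zero, mul_one, div_le_div_iff₀ hF hC]
    exact_mod_cast (show ρ * F.choose ρ = (F - 1).choose (ρ - 1) * F by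
      rw [mul_comm, ← h, mul_comm]).le
  | succ n ih =>
    have hm : 0 < F - n - 1 := by omega
    have hmF : (F : ℝ) ≤ 2 * (F - n - 1 : ℕ) := by
      exact_mod_cast (show F ≤ 2 * (F - n - 1) by omega)
    have hratio : 1 - 2 * ρ / F ≤ 1 - ((ρ - 1 : ℕ) : ℝ) / (F - n - 1 : ℕ) := by
      have hmpos : (0 : ℝ) < (F - n - 1 : ℕ) := by exact_mod_cast hm
      have hρ1 : (1 : ℝ) ≤ ρ := by exact_mod_cast hρ
      rw [sub_le_sub_iff_left, Nat.cast_pred hρ, div_le_div_iff₀ hmpos hF]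
      nlinarith
    have hstep := Nat.cast_choose_pred (K := ℝ) hm (ρ - 1)
    rw [show F - n - 1 - 1 = F - (n + 1) - 1 by omega] at hstep
    rw [hstep, mul_div_right_comm (_ : ℝ) (1 - _), pow_succ, ← mul_assoc]
    exact mul_le_mul (ih (by omega)) hratio hβ (by positivity)

theorem stmt_3_general (F kf ρ : ℕ) (hkf : 0 < kf) (hρ : 0 < ρ)
    (hρF : (ρ : ℝ) ≤ (F : ℝ) / (2 * kf))
    (α : ℝ) (hα0 : 0 ≤ α) (hα1 : α ≤ 1)
    (x : ℕ) (hxkf : x ≤ kf) :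
    ∑ ℓ ∈ Finset.range (x + 1),
      (x.choose ℓ : ℝ) * α ^ ℓ * (1 - α) ^ (x - ℓ) *
        (1 - ((F - ℓ - 1).choose (ρ - 1) : ℝ) / (F.choose ρ : ℝ))
      ≤ 1 - ((ρ : ℝ) / F) * (1 - 2 * ρ * α / F) ^ x := by
  have hρkf : 2 * ρ * kf ≤ F := by
    rw [le_div_iff₀ (by positivity)] at hρF
    exact_mod_cast (by push_cast; linarith : ((2 * ρ * kf : ℕ) : ℝ) ≤ F)
  have h2ρ : 2 * ρ ≤ F := (Nat.le_mul_of_pos_right _ hkf).trans hρkf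
  have h2x : 2 * x ≤ F := by nlinarith
  have h1α : 0 ≤ 1 - α := sub_nonneg.mpr hα1
  have hmass := sum_choose_mul_pow_mul_pow α 1 x
  simp only [one_pow, mul_one, sub_add_cancel] at hmass
  calc _ = 1 - ∑ ℓ ∈ range (x + 1), (x.choose ℓ : ℝ) * α ^ ℓ * (1 - α) ^ (x - ℓ) *
          (((F - ℓ - 1).choose (ρ - 1) : ℝ) / F.choose ρ) := by
        simp only [mul_sub, mul_one, sum_sub_distrib, hmass]
    _ ≤ 1 - ∑ ℓ ∈ range (x + 1), (x.choose ℓ : ℝ) * α ^ ℓ * (1 - α) ^ (x - ℓ) *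
          ((ρ / F : ℝ) * (1 - 2 * ρ / F) ^ ℓ) := by
        gcongr with ℓ hℓ
        exact div_mul_pow_le_choose_div_choose hρ h2ρ (by grind)
    _ = _ := by
        simp only [mul_left_comm _ (ρ / F : ℝ), ← mul_sum, sum_choose_mul_pow_mul_pow]
        ring

theorem stmt_3 (F kf ρ : ℕ) (hF : 0 < F) (hkf : 0 < kf) (hρ : 0 < ρ)
    (hkfF : (kf : ℝ) ≤ F / 2) (hρF : (ρ : ℝ) ≤ (F : ℝ) / (2 * kf))
    (α : ℝ) (hα0 : 0 ≤ α) (hα1 : α ≤ 1)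
    (x : ℕ) (hx1 : 1 ≤ x) (hxkf : x ≤ kf) :
    ∑ ℓ ∈ Finset.range (x + 1),
      (x.choose ℓ : ℝ) * α ^ ℓ * (1 - α) ^ (x - ℓ) *
        (1 - ((F - ℓ - 1).choose (ρ - 1) : ℝ) / (F.choose ρ : ℝ))
      ≤ 1 - ((ρ : ℝ) / F) * (1 - 2 * ρ * α / F) ^ x :=
  stmt_3_general F kf ρ hkf hρ hρF α hα0 hα1 x hxkf
end

section
/- Let F, k_f, ρ be positive integers with ℓ ≤ k_f ≤ F/2 and ρ ≤ F/(2·k_f). Then 1 − C(F−ℓ−1, ρ−1)/C(F, ρ) = 1 − (ρ/(F−ℓ))·∏_{j=1}^{ℓ} (1 − ρ/(F−j+1)), and this quantity is at most 1 − (ρ/F)·(1 − 2ρ/F)^ℓ. -/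
/-!
For `ℓ = 0` both sides of the identity equal `ρ / F` (absorption identity), and raising `ℓ` by one
multiplies both by `(F - ℓ - ρ) / (F - ℓ - 1)`; so they agree as long as `ρ + ℓ ≤ F`.
The hypotheses give `2 ρ k_f ≤ F`, hence `2ρ ≤ F` and `2ℓ ≤ F`. Then every factor
`1 - ρ / (F - j + 1)` with `j ≤ ℓ` is at least `1 - 2ρ / F`, and `ρ / (F - ℓ) ≥ ρ / F`.
-/

open Finset

theorem choose_pred_div_choose_eq_prod {F ρ ℓ : ℕ} (hρ : 0 < ρ) (h : ρ + ℓ ≤ F) :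
    ((F - ℓ - 1).choose (ρ - 1) : ℝ) / F.choose ρ
      = ((ρ : ℝ) / ((F : ℝ) - ℓ)) * ∏ j ∈ Icc 1 ℓ, (1 - (ρ : ℝ) / ((F : ℝ) - j + 1)) := by
  induction ℓ with
  | zero =>
    obtain ⟨r, rfl⟩ : ∃ r, ρ = r + 1 := ⟨ρ - 1, by omega⟩
    obtain ⟨n, rfl⟩ : ∃ n, F = n + 1 := ⟨F - 1, by omega⟩
    have hpos : (0 : ℝ) < (n + 1).choose (r + 1) := by
      exact_mod_cast Nat.choose_pos (by omega)
    have habsorb : ((n + 1 : ℕ) : ℝ) * n.choose r = (n + 1).choose (r + 1) * (r + 1 : ℕ) := by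
      exact_mod_cast Nat.add_one_mul_choose_eq n r
    rw [Icc_eq_empty (by omega), prod_empty, mul_one]
    simp only [Nat.add_sub_cancel, Nat.sub_zero, Nat.cast_zero, sub_zero]
    push_cast at habsorb ⊢
    field_simp
    linear_combination habsorb
  | succ ℓ ih =>
    specialize ih (by omega)
    obtain ⟨r, rfl⟩ : ∃ r, ρ = r + 1 := ⟨ρ - 1, by omega⟩
    obtain ⟨n, rfl⟩ : ∃ n, F = n + ℓ + 2 := ⟨F - ℓ - 2, by omega⟩
    have hpos : (0 : ℝ) < (n + ℓ + 2).choose (r + 1) := by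
      exact_mod_cast Nat.choose_pos (by omega)
    have hstep : (n.choose r : ℝ) * (n + 1 : ℕ) = (n + 1).choose r * (n + 1 - r : ℕ) := by
      exact_mod_cast Nat.choose_mul_succ_eq n r
    rw [show n + ℓ + 2 - (ℓ + 1) - 1 = n by omega, prod_Icc_succ_top (by omega)]
    rw [show n + ℓ + 2 - ℓ - 1 = n + 1 by omega] at ih
    rw [Nat.cast_sub (by omega)] at hstep
    push_cast at hstep ih ⊢
    rw [show (n : ℝ) + ℓ + 2 - ℓ = n + 2 by ring] at ih
    rw [show (n : ℝ) + ℓ + 2 - (ℓ + 1) = n + 1 by ring, show (n : ℝ) + 1 + 1 = n + 2 by ring]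
    set P := ∏ x ∈ Icc 1 ℓ, (1 - ((r : ℝ) + 1) / (n + ℓ + 2 - x + 1))
    have hprod : P = (n + 1).choose r / (n + ℓ + 2).choose (r + 1) * ((n + 2) / (r + 1)) := by
      rw [ih]; field_simp
    rw [hprod]
    field_simp
    linear_combination hstep

theorem div_sub_add_one_le_two_mul_div {F ρ j : ℝ} (hρ : 0 ≤ ρ) (hF : 0 < F) (hj : 2 * j ≤ F) :
    ρ / (F - j + 1) ≤ 2 * ρ / F := by
  rw [div_le_div_iff₀ (by linarith) hF]
  nlinarith

theorem one_sub_two_mul_div_nonneg {F ρ : ℕ} (hρ : 2 * ρ ≤ F) : 0 ≤ 1 - 2 * (ρ : ℝ) / F := by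
  rcases Nat.eq_zero_or_pos F with rfl | hF
  · simp
  · rw [sub_nonneg, div_le_one (by exact_mod_cast hF)]
    exact_mod_cast hρ

theorem pow_le_prod_one_sub_div {F ρ ℓ : ℕ} (hF : 0 < F) (hρ : 2 * ρ ≤ F) (hℓ : 2 * ℓ ≤ F) :
    (1 - 2 * (ρ : ℝ) / F) ^ ℓ ≤ ∏ j ∈ Icc 1 ℓ, (1 - (ρ : ℝ) / ((F : ℝ) - j + 1)) := by
  have hF' : (0 : ℝ) < F := by exact_mod_cast hF
  calc (1 - 2 * (ρ : ℝ) / F) ^ ℓ = ∏ _j ∈ Icc 1 ℓ, (1 - 2 * (ρ : ℝ) / F) := by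
        rw [prod_const, Nat.card_Icc, Nat.add_sub_cancel]
    _ ≤ _ := by
        refine prod_le_prod (fun _ _ => one_sub_two_mul_div_nonneg hρ) fun j hj => ?_
        have hjF : 2 * (j : ℝ) ≤ F := by exact_mod_cast (by grind : 2 * j ≤ F)
        linarith [div_sub_add_one_le_two_mul_div (Nat.cast_nonneg ρ) hF' hjF]

theorem div_mul_pow_le_div_mul_prod {F ρ ℓ : ℕ} (hF : 0 < F) (hρ : 2 * ρ ≤ F)
    (hℓ : 2 * ℓ ≤ F) :
    ((ρ : ℝ) / F) * (1 - 2 * ρ / F) ^ ℓ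
      ≤ ((ρ : ℝ) / ((F : ℝ) - ℓ)) * ∏ j ∈ Icc 1 ℓ, (1 - (ρ : ℝ) / ((F : ℝ) - j + 1)) := by
  have hℓF : (ℓ : ℝ) < F := by exact_mod_cast (by omega : ℓ < F)
  gcongr
  · exact pow_nonneg (one_sub_two_mul_div_nonneg hρ) ℓ
  · linarith [(Nat.cast_nonneg ℓ : (0 : ℝ) ≤ ℓ)]
  · exact pow_le_prod_one_sub_div hF hρ hℓ

theorem stmt_4_general (F kf ρ ℓ : ℕ) (hρ : 0 < ρ)
    (hℓ : ℓ ≤ kf) (hρF : (ρ : ℝ) ≤ (F : ℝ) / (2 * kf)) :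
    (1 - ((F - ℓ - 1).choose (ρ - 1) : ℝ) / (F.choose ρ : ℝ)
      = 1 - ((ρ : ℝ) / ((F : ℝ) - ℓ)) *
          ∏ j ∈ Finset.Icc 1 ℓ, (1 - (ρ : ℝ) / ((F : ℝ) - j + 1))) ∧
    (1 - ((F - ℓ - 1).choose (ρ - 1) : ℝ) / (F.choose ρ : ℝ)
      ≤ 1 - ((ρ : ℝ) / F) * (1 - 2 * ρ / F) ^ ℓ) := by
  have hkf : kf ≠ 0 := by
    rintro rfl
    simp only [Nat.cast_zero, mul_zero, div_zero, Nat.cast_nonpos] at hρF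
    omega
  have hρkf : 2 * ρ * kf ≤ F := by
    have := (le_div_iff₀ (by positivity)).1 hρF
    exact_mod_cast (by push_cast; linarith : ((2 * ρ * kf : ℕ) : ℝ) ≤ F)
  have hρ2 : 2 * ρ ≤ F := le_trans (Nat.le_mul_of_pos_right _ (Nat.pos_of_ne_zero hkf)) hρkf
  have hℓ2 : 2 * ℓ ≤ F := by nlinarith
  rw [choose_pred_div_choose_eq_prod hρ (by omega)]
  exact ⟨rfl, sub_le_sub_left (div_mul_pow_le_div_mul_prod (by omega) hρ2 hℓ2) 1⟩

theorem stmt_4 (F kf ρ ℓ : ℕ) (hF : 0 < F) (hkf : 0 < kf) (hρ : 0 < ρ)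
    (hℓ : ℓ ≤ kf) (hkfF : (kf : ℝ) ≤ F / 2) (hρF : (ρ : ℝ) ≤ (F : ℝ) / (2 * kf)) :
    (1 - ((F - ℓ - 1).choose (ρ - 1) : ℝ) / (F.choose ρ : ℝ)
      = 1 - ((ρ : ℝ) / ((F : ℝ) - ℓ)) *
          ∏ j ∈ Finset.Icc 1 ℓ, (1 - (ρ : ℝ) / ((F : ℝ) - j + 1))) ∧
    (1 - ((F - ℓ - 1).choose (ρ - 1) : ℝ) / (F.choose ρ : ℝ)
      ≤ 1 - ((ρ : ℝ) / F) * (1 - 2 * ρ / F) ^ ℓ) :=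
  stmt_4_general F kf ρ ℓ hρ hℓ hρF
end

section
/- Let F, k_f, ρ be positive integers with k_f ≥ 2, k_f ≤ F/2, and ρ ≤ F/(2·k_f), and let α ∈ (0,1]. Define h_x = Σ_{ℓ=0}^{x} C(x,ℓ)·α^ℓ·(1−α)^{x−ℓ}·(1 − C(F−ℓ−1, ρ−1)/C(F, ρ)). Then α − (h_{k_f} − (1−α)·h_{k_f−1}) ≥ (α·ρ/(2F))·e^{−2}. -/
/-!
Write `c ℓ = C(F-ℓ-1, ρ-1) / C(F, ρ)`, so that `h x = 1 - 𝔼[c X]` for `X ∼ Bin(x, α)`.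
Conditioning on the first trial gives `𝔼[c X_{k+1}] = (1-α) 𝔼[c X_k] + α 𝔼[c (X_k + 1)]`,
so the left-hand side equals `α 𝔼[c (X_{k_f-1} + 1)] ≥ α c(k_f)` because `c` is antitone.
Finally `c(k_f) = (ρ/F) C(F-1-k_f, ρ-1) / C(F-1, ρ-1)`, and the last ratio is at least `1/2` by a
union bound: a random `(ρ-1)`-subset of `F-1` points meets a fixed `k_f`-subset with probability
at most `k_f (ρ-1)/(F-1) ≤ 1/2`. The factor `e^{-2}` is slack.
-/

open Finset

namespace Nat

theorem choose_le_choose_sub_add_mul (n k r : ℕ) :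
    n.choose r ≤ (n - k).choose r + k * (n - 1).choose (r - 1) := by
  induction k with
  | zero => simp
  | succ k ih =>
    suffices (n - k).choose r ≤ (n - (k + 1)).choose r + (n - 1).choose (r - 1) by
      rw [add_mul, one_mul]; omega
    rcases hm : n - k with _ | m
    · rw [show n - (k + 1) = 0 by omega]
      omega
    · cases r with
      | zero => simp
      | succ s =>
        rw [show n - (k + 1) = m by omega, choose_succ_succ', add_comm, Nat.add_sub_cancel]
        exact Nat.add_le_add_left (choose_le_choose s (by omega)) _

theorem choose_le_two_mul_choose_sub {n k r : ℕ} (h : 2 * k * r ≤ n) :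
    n.choose r ≤ 2 * (n - k).choose r := by
  rcases n with _ | m
  · simp only [Nat.zero_sub]
    omega
  rcases r with _ | s
  · simp
  have hunion := choose_le_choose_sub_add_mul (m + 1) k (s + 1)
  have hid := add_one_mul_choose_eq m s
  simp only [Nat.add_sub_cancel] at hunion
  refine Nat.le_of_mul_le_mul_left (c := m + 1) ?_ (by omega)
  nlinarith

end Nat

theorem div_two_mul_le_choose_sub_div_choose {F k ρ : ℕ} (hk : 0 < k) (hρ : 0 < ρ)
    (h : 2 * k * ρ ≤ F) :
    (ρ : ℝ) / (2 * F) ≤ ((F - k - 1).choose (ρ - 1) : ℝ) / F.choose ρ := by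
  have hρF : ρ ≤ F := le_trans (Nat.le_mul_of_pos_left ρ (by omega)) h
  obtain ⟨r, rfl⟩ : ∃ r, ρ = r + 1 := ⟨ρ - 1, by omega⟩
  obtain ⟨n, rfl⟩ : ∃ n, F = n + 1 := ⟨F - 1, by omega⟩
  rw [show n + 1 - k - 1 = n - k by omega, Nat.add_sub_cancel]
  have hkey : n.choose r ≤ 2 * (n - k).choose r :=
    Nat.choose_le_two_mul_choose_sub (by nlinarith)
  have hid := Nat.add_one_mul_choose_eq n r
  have hpos : 0 < (n + 1).choose (r + 1) := Nat.choose_pos hρF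
  rw [div_le_div_iff₀ (by positivity) (by exact_mod_cast hpos)]
  exact_mod_cast (by nlinarith : (r + 1) * (n + 1).choose (r + 1) ≤ (n - k).choose r * (2 * (n + 1)))

section BinomialMean

variable (α : ℝ) (x : ℕ) (c : ℕ → ℝ)

/-- `𝔼[c X]` for `X ∼ Bin(x, α)`. -/
noncomputable def binomialMean : ℝ :=
  ∑ ℓ ∈ range (x + 1), (x.choose ℓ : ℝ) * α ^ ℓ * (1 - α) ^ (x - ℓ) * c ℓ

theorem binomialMean_const (a : ℝ) : binomialMean α x (fun _ => a) = a := by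
  calc binomialMean α x (fun _ => a)
      = (∑ ℓ ∈ range (x + 1), α ^ ℓ * (1 - α) ^ (x - ℓ) * (x.choose ℓ : ℝ)) * a := by
        rw [binomialMean, sum_mul]
        exact sum_congr rfl fun ℓ _ => by ring
    _ = a := by rw [← add_pow, add_sub_cancel, one_pow, one_mul]

theorem binomialMean_one_sub :
    binomialMean α x (fun ℓ => 1 - c ℓ) = 1 - binomialMean α x c := by
  have hweights := binomialMean_const α x 1
  simp only [binomialMean, mul_one] at hweights
  simp only [binomialMean, mul_sub, mul_one, sum_sub_distrib, hweights]

theorem binomialMean_succ :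
    binomialMean α (x + 1) c =
      (1 - α) * binomialMean α x c + α * binomialMean α x (fun ℓ => c (ℓ + 1)) := by
  have hfail : (1 - α) * binomialMean α x c =
      ∑ i ∈ range (x + 1), (x.choose (i + 1) : ℝ) * α ^ (i + 1) * (1 - α) ^ (x - i) * c (i + 1)
        + (1 - α) ^ (x + 1) * c 0 := by
    rw [binomialMean, mul_sum, sum_range_succ', sum_range_succ (n := x), Nat.choose_succ_self]
    simp only [Nat.cast_zero, zero_mul, add_zero, Nat.choose_zero_right, Nat.cast_one, pow_zero,
      one_mul, Nat.sub_zero]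
    congr 1
    · refine sum_congr rfl fun i hi => ?_
      rw [show x - i = x - (i + 1) + 1 by simp at hi; omega, pow_succ]
      ring
    · ring
  have hsuccess : α * binomialMean α x (fun ℓ => c (ℓ + 1)) =
      ∑ i ∈ range (x + 1), (x.choose i : ℝ) * α ^ (i + 1) * (1 - α) ^ (x - i) * c (i + 1) := by
    rw [binomialMean, mul_sum]
    exact sum_congr rfl fun i _ => by ring
  rw [hfail, hsuccess, binomialMean, sum_range_succ']
  simp only [Nat.choose_succ_succ', Nat.cast_add, add_mul, sum_add_distrib,
    Nat.add_sub_add_right, Nat.choose_zero_right, Nat.cast_one, pow_zero, one_mul, Nat.sub_zero]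
  ring

variable {α x c}

theorem le_binomialMean {a : ℝ} (hα0 : 0 ≤ α) (hα1 : α ≤ 1) (h : ∀ ℓ ≤ x, a ≤ c ℓ) :
    a ≤ binomialMean α x c := by
  conv_lhs => rw [← binomialMean_const α x a]
  refine sum_le_sum fun ℓ hℓ => ?_
  have : 0 ≤ 1 - α := by linarith
  gcongr
  exact h ℓ (by simpa [Nat.lt_succ_iff] using hℓ)

end BinomialMean

theorem stmt_5_general (F kf ρ : ℕ) (hkf : 2 ≤ kf) (hρ : 0 < ρ)
    (hρF : (ρ : ℝ) ≤ (F : ℝ) / (2 * kf))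
    (α : ℝ) (hα0 : 0 < α) (hα1 : α ≤ 1)
    (h : ℕ → ℝ)
    (hdef : ∀ x : ℕ, h x = ∑ ℓ ∈ Finset.range (x + 1),
      (x.choose ℓ : ℝ) * α ^ ℓ * (1 - α) ^ (x - ℓ) *
        (1 - ((F - ℓ - 1).choose (ρ - 1) : ℝ) / (F.choose ρ : ℝ))) :
    α - (h kf - (1 - α) * h (kf - 1)) ≥ (α * ρ / (2 * F)) * Real.exp (-2) := by
  set c : ℕ → ℝ := fun ℓ => ((F - ℓ - 1).choose (ρ - 1) : ℝ) / F.choose ρ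
  have hh : ∀ x, h x = 1 - binomialMean α x c := fun x => by
    rw [hdef, ← binomialMean_one_sub, binomialMean]
  have h2kρ : 2 * kf * ρ ≤ F := by
    rw [le_div_iff₀ (by positivity)] at hρF
    exact_mod_cast (by push_cast; linarith : ((2 * kf * ρ : ℕ) : ℝ) ≤ F)
  obtain ⟨k, rfl⟩ : ∃ k, kf = k + 1 := ⟨kf - 1, by omega⟩
  have hmean : c (k + 1) ≤ binomialMean α k (fun ℓ => c (ℓ + 1)) :=
    le_binomialMean hα0.le hα1 fun ℓ hℓ =>
      div_le_div_of_nonneg_right (by exact_mod_cast Nat.choose_le_choose _ (by omega)) (by positivity)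
  calc α * ρ / (2 * F) * Real.exp (-2) ≤ α * (ρ / (2 * F)) := by
        rw [mul_div_assoc]
        exact mul_le_of_le_one_right (by positivity) (Real.exp_le_one_iff.2 (by norm_num))
    _ ≤ α * c (k + 1) := by
        gcongr
        exact div_two_mul_le_choose_sub_div_choose (by omega) hρ h2kρ
    _ ≤ α * binomialMean α k (fun ℓ => c (ℓ + 1)) := by gcongr
    _ = α - (h (k + 1) - (1 - α) * h (k + 1 - 1)) := by
        rw [hh, hh, Nat.add_sub_cancel, binomialMean_succ]
        ring

theorem stmt_5 (F kf ρ : ℕ) (hF : 0 < F) (hkf : 2 ≤ kf) (hρ : 0 < ρ)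
    (hkfF : (kf : ℝ) ≤ F / 2) (hρF : (ρ : ℝ) ≤ (F : ℝ) / (2 * kf))
    (α : ℝ) (hα0 : 0 < α) (hα1 : α ≤ 1)
    (h : ℕ → ℝ)
    (hdef : ∀ x : ℕ, h x = ∑ ℓ ∈ Finset.range (x + 1),
      (x.choose ℓ : ℝ) * α ^ ℓ * (1 - α) ^ (x - ℓ) *
        (1 - ((F - ℓ - 1).choose (ρ - 1) : ℝ) / (F.choose ρ : ℝ))) :
    α - (h kf - (1 - α) * h (kf - 1)) ≥ (α * ρ / (2 * F)) * Real.exp (-2) :=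
  stmt_5_general F kf ρ hkf hρ hρF α hα0 hα1 h hdef
end

section
/- Let F, k_f, M, k_m, ρ_T be positive integers with 2·k_f dividing F, ρ_T ≥ F·M/(k_f·k_m), and k_m ≤ M. Define ρ̂ = min{ρ_T, F/(2k_f)} and f(ρ̂) = ρ̂·(1 − (1 − k_m/M)^{ρ_T/(2ρ̂)}). Then f(ρ̂) ≥ (F/(2k_f))·(1 − e^{−1}). -/
theorem stmt_11 (F kf M km ρT : ℕ) (hF : 0 < F) (hkf : 0 < kf) (hM : 0 < M)
    (hkm : 0 < km) (hρT : 0 < ρT) (hdvd : 2 * kf ∣ F) (hkmM : km ≤ M)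
    (hρTlb : (ρT : ℝ) ≥ (F : ℝ) * M / (kf * km)) :
    (min (ρT : ℝ) ((F : ℝ) / (2 * kf))) *
      (1 - (1 - (km : ℝ) / M) ^ ((ρT : ℝ) / (2 * min (ρT : ℝ) ((F : ℝ) / (2 * kf)))))
      ≥ ((F : ℝ) / (2 * kf)) * (1 - Real.exp (-1)) := by
  have hF' : (0:ℝ) < F := Nat.cast_pos.mpr hF
  have hkf' : (0:ℝ) < kf := Nat.cast_pos.mpr hkf
  have hM' : (0:ℝ) < M := Nat.cast_pos.mpr hM
  have hkm' : (0:ℝ) < km := Nat.cast_pos.mpr hkm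
  have hρT' : (0:ℝ) < ρT := Nat.cast_pos.mpr hρT
  have hkmM' : (km:ℝ) ≤ M := Nat.cast_le.mpr hkmM
  have hlb : (F:ℝ) * M ≤ ρT * (kf * km) := by
    rw [ge_iff_le, div_le_iff₀ (by positivity)] at hρTlb
    linarith
  have hmin : min (ρT : ℝ) ((F : ℝ) / (2 * kf)) = (F : ℝ) / (2 * kf) := by
    apply min_eq_right
    rw [div_le_iff₀ (by positivity)]
    nlinarith
  rw [hmin]
  set a : ℝ := (F:ℝ)/(2*kf) with ha
  have ha0 : 0 < a := by positivity
  set x : ℝ := (km:ℝ)/M with hx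
  have hx0 : 0 < x := by positivity
  have hx1 : x ≤ 1 := by rw [hx, div_le_one hM']; exact hkmM'
  set t : ℝ := (ρT:ℝ)/(2*a) with hT
  have ht0 : 0 ≤ t := by positivity
  have hxt : 1 ≤ x * t := by
    rw [hx, hT, ha]
    rw [div_mul_div_comm]
    rw [le_div_iff₀ (by positivity)]
    have h2a : (M:ℝ) * ((2:ℝ) * ((F:ℝ)/(2*kf))) = M * F / kf := by
      field_simp
    rw [h2a, one_mul, div_le_iff₀ hkf']
    nlinarith
  have hexp : (1 - x) ^ t ≤ Real.exp (-1) := by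
    have hbase : (0:ℝ) ≤ 1 - x := by linarith
    have h2 : 1 - x ≤ Real.exp (-x) := by
      have := Real.add_one_le_exp (-x); linarith
    calc (1 - x) ^ t ≤ (Real.exp (-x)) ^ t := Real.rpow_le_rpow hbase h2 ht0
      _ = Real.exp (-x * t) := (Real.exp_mul (-x) t).symm
      _ ≤ Real.exp (-1) := Real.exp_le_exp.mpr (by nlinarith)
  have hle : a * (1 - Real.exp (-1)) ≤ a * (1 - (1 - x) ^ t) := by
    apply mul_le_mul_of_nonneg_left _ ha0.le
    linarith
  exact hle
end

section
/- Let F, k_f, M, k_m, ρ_T be positive integers with 2·k_f dividing F, 1 ≤ ρ_T < F·M/(k_f·k_m), and k_m ≤ M. Define ρ̂ = min{ρ_T, F/(2k_f)} and f(ρ̂) = ρ̂·(1 − (1 − k_m/M)^{ρ_T/(2ρ̂)}). Then f(ρ̂) ≥ ρ_T·k_m/(4M). -/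
lemma aux_exp_12 (u : ℝ) (hu0 : 0 ≤ u) (hu1 : u ≤ 1) : Real.exp (-u) ≤ 1 - u / 2 := by
  have h := Real.add_one_le_exp u
  have hpos : (0:ℝ) < 1 + u := by linarith
  have hepos : (0:ℝ) < Real.exp u := Real.exp_pos u
  rw [Real.exp_neg]
  have h1 : (Real.exp u)⁻¹ ≤ (1 + u)⁻¹ := by
    apply inv_anti₀ hpos; linarith
  have h2 : (1 + u)⁻¹ ≤ 1 - u / 2 := by
    rw [inv_eq_one_div, div_le_iff₀ hpos]; nlinarith
  linarith

lemma aux_rpow_12 (t a : ℝ) (ht0 : 0 ≤ t) (ht1 : t ≤ 1) (ha : 0 < a)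
    (h : a * (1 - t) ≤ 1) : t ^ a ≤ 1 - a * (1 - t) / 2 := by
  rcases eq_or_lt_of_le ht0 with h0 | h0
  · rw [← h0, Real.zero_rpow (ne_of_gt ha)]
    nlinarith
  · have hlog : Real.log t ≤ t - 1 := Real.log_le_sub_one_of_pos h0
    rw [Real.rpow_def_of_pos h0]
    have hle : Real.log t * a ≤ -(a * (1 - t)) := by nlinarith
    calc Real.exp (Real.log t * a) ≤ Real.exp (-(a * (1 - t))) := Real.exp_le_exp.mpr hle
      _ ≤ 1 - a * (1 - t) / 2 := aux_exp_12 _ (by nlinarith) h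

theorem stmt_12 (F kf M km ρT : ℕ) (hF : 0 < F) (hkf : 0 < kf) (hM : 0 < M)
    (hkm : 0 < km) (hρT : 1 ≤ ρT) (hdvd : 2 * kf ∣ F) (hkmM : km ≤ M)
    (hρTub : (ρT : ℝ) < (F : ℝ) * M / (kf * km)) :
    (min (ρT : ℝ) ((F : ℝ) / (2 * kf))) *
      (1 - (1 - (km : ℝ) / M) ^ ((ρT : ℝ) / (2 * min (ρT : ℝ) ((F : ℝ) / (2 * kf)))))
      ≥ (ρT : ℝ) * km / (4 * M) := by
  have hMpos : (0:ℝ) < M := by exact_mod_cast hM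
  have hkmpos : (0:ℝ) < km := by exact_mod_cast hkm
  have hFpos : (0:ℝ) < F := by exact_mod_cast hF
  have hkfpos : (0:ℝ) < kf := by exact_mod_cast hkf
  have hρTpos : (0:ℝ) < ρT := by exact_mod_cast hρT
  have hFk : (0:ℝ) < (F:ℝ) / (2 * kf) := by positivity
  set r : ℝ := min (ρT : ℝ) ((F : ℝ) / (2 * kf)) with hr
  have hrpos : 0 < r := lt_min hρTpos hFk
  set x : ℝ := (km : ℝ) / M with hx
  have hx0 : 0 < x := by positivity
  have hx1 : x ≤ 1 := by
    rw [hx, div_le_one hMpos]; exact_mod_cast hkmM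
  set a : ℝ := (ρT : ℝ) / (2 * r) with haa
  have ha : 0 < a := by positivity
  have hax : a * x ≤ 1 := by
    rcases min_cases (ρT : ℝ) ((F : ℝ) / (2 * kf)) with ⟨hmin, _⟩ | ⟨hmin, hlt⟩
    · rw [haa, hx, hr, hmin]
      rw [div_mul_div_comm, div_le_one (by positivity)]
      have hkmM' : (km:ℝ) ≤ M := by exact_mod_cast hkmM
      nlinarith
    · rw [haa, hx, hr, hmin]
      rw [div_mul_div_comm, div_le_one (by positivity)]
      have hub : (ρT : ℝ) * (kf * km) < (F : ℝ) * M :=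
        (lt_div_iff₀ (by positivity : (0:ℝ) < (kf:ℝ) * km)).mp hρTub
      have h2kf : 2 * ((F:ℝ) / (2 * kf)) * kf = F := by field_simp
      nlinarith [hub, h2kf, hkfpos, mul_pos hρTpos hkmpos]
  have key : (1 - x) ^ a ≤ 1 - a * x / 2 := by
    have := aux_rpow_12 (1 - x) a (by linarith) (by linarith) ha (by
      simpa using hax)
    simpa using this
  have hra : r * a = (ρT : ℝ) / 2 := by
    rw [haa]; field_simp
  have h1 : r * (1 - (1 - x) ^ a) ≥ r * (a * x / 2) := by
    apply mul_le_mul_of_nonneg_left _ hrpos.le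
    linarith
  have h2 : r * (a * x / 2) = (ρT : ℝ) * x / 4 := by
    rw [show r * (a * x / 2) = (r * a) * x / 2 by ring, hra]; ring
  have h3 : (ρT : ℝ) * x / 4 = (ρT : ℝ) * km / (4 * M) := by
    rw [hx]; field_simp
  calc r * (1 - (1 - x) ^ a) ≥ r * (a * x / 2) := h1
    _ = (ρT : ℝ) * km / (4 * M) := by rw [h2, h3]
end
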